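/- arXiv:1506.05770 — 3 statements merged into one kernel-verified Lean document; each statement's English description precedes it below -/
import Mathlib

section
/- The sufficient conditions of the cycle-spanning theorem for similar systems are not necessary: there exist n, p, r and Boolean matrices Ā', H̄ ∈ {0,1}^{n×n}, B̄' ∈ {0,1}^{n×p}, Ē ∈ {0,1}^{r×r} with Ē_{ii} = 0 such that (Ā', B̄') is not structurally controllable, the similar system (Ā, B̄) with Ā = (I_r ⊗ Ā') ∨ (Ē ⊗ H̄) and B̄ = I_r ⊗ B̄' is structurally controllable, and yet the condensed graph D(Ē) is not spanned by disjoint cycles, i.e., there is no permutation σ of {1,…,r} with Ē_{σ(i),i} = 1 for all i. -/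
open Matrix

/-- Controllability matrix `[B, AB, …, A^{n-1}B]` (columns indexed by `Fin (card X) × U`). -/
def ctrbMatrix {X U : Type*} [Fintype X] [DecidableEq X]
    (A : Matrix X X ℝ) (B : Matrix X U ℝ) :
    Matrix X (Fin (Fintype.card X) × U) ℝ :=
  fun i kj => (A ^ (kj.1 : ℕ) * B) i kj.2

/-- A real pair `(A,B)` is controllable if its controllability matrix has full rank. -/
def Controllable {X U : Type*} [Fintype X] [DecidableEq X] [Fintype U]
    (A : Matrix X X ℝ) (B : Matrix X U ℝ) : Prop :=
  (ctrbMatrix A B).rank = Fintype.card X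

/-- `M` has the same sparsity pattern as the Boolean matrix `Mb`. -/
def SameSparsity {X Y : Type*} (M : Matrix X Y ℝ) (Mb : Matrix X Y Bool) : Prop :=
  ∀ i j, M i j = 0 ↔ Mb i j = false

/-- Structural controllability of a structural (Boolean) pair. -/
def StructurallyControllable {X U : Type*} [Fintype X] [DecidableEq X] [Fintype U]
    (Ab : Matrix X X Bool) (Bb : Matrix X U Bool) : Prop :=
  ∃ A : Matrix X X ℝ, ∃ B : Matrix X U ℝ,
    SameSparsity A Ab ∧ SameSparsity B Bb ∧ Controllable A B

/-- Edge relation of the system digraph `D(Ā,B̄)`. -/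
def sysDigraphRel {X U : Type*} (Ab : Matrix X X Bool) (Bb : Matrix X U Bool) :
    (X ⊕ U) → (X ⊕ U) → Prop :=
  fun v w => match v, w with
  | Sum.inl j, Sum.inl i => Ab i j = true
  | Sum.inr k, Sum.inl i => Bb i k = true
  | _, Sum.inr _ => False

/-- A state vertex is input-reachable if some input vertex has a directed path to it. -/
def InputReachable {X U : Type*} (Ab : Matrix X X Bool) (Bb : Matrix X U Bool) (x : X) : Prop :=
  ∃ u : U, Relation.ReflTransGen (sysDigraphRel Ab Bb) (Sum.inr u) (Sum.inl x)

/-- Edge relation of the system bipartite graph `B(Ā,B̄)` (left = states ⊕ inputs, right = states). -/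
def sysBipEdge {X U : Type*} (Ab : Matrix X X Bool) (Bb : Matrix X U Bool) :
    (X ⊕ U) → X → Prop :=
  fun v i => match v with
  | Sum.inl j => Ab i j = true
  | Sum.inr k => Bb i k = true

/-- Edge relation of the state bipartite graph `B(Ā)`. -/
def stateBipEdge {X : Type*} (Ab : Matrix X X Bool) : X → X → Prop :=
  fun j i => Ab i j = true

/-- A matching of a bipartite graph with edge relation `E`: a set of edges sharing no
left vertex and no right vertex. -/
def IsMatching {α β : Type*} (E : α → β → Prop) (M : Set (α × β)) : Prop :=
  (∀ e ∈ M, E e.1 e.2) ∧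
  (∀ e ∈ M, ∀ f ∈ M, e.1 = f.1 → e = f) ∧
  (∀ e ∈ M, ∀ f ∈ M, e.2 = f.2 → e = f)

/-- Right vertices belonging to no edge of `M`. -/
def rightUnmatched {α β : Type*} (M : Set (α × β)) : Set β :=
  {b | ∀ e ∈ M, e.2 ≠ b}

/-- Left vertices belonging to no edge of `M`. -/
def leftUnmatched {α β : Type*} (M : Set (α × β)) : Set α :=
  {a | ∀ e ∈ M, e.1 ≠ a}

/-- A maximum matching: a matching of the largest cardinality. -/
def IsMaxMatching {α β : Type*} (E : α → β → Prop) (M : Set (α × β)) : Prop :=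
  IsMatching E M ∧ ∀ M' : Set (α × β), IsMatching E M' → M'.ncard ≤ M.ncard

/-- `S` is a strongly connected component of the digraph with edge relation `R`. -/
def IsSCC {V : Type*} (R : V → V → Prop) (S : Set V) : Prop :=
  S.Nonempty ∧ (∀ u ∈ S, ∀ v ∈ S, Relation.ReflTransGen R u v) ∧
  ∀ w : V, (∀ u ∈ S, Relation.ReflTransGen R u w ∧ Relation.ReflTransGen R w u) → w ∈ S

/-- An SCC is non-top linked if it has no incoming edge from outside. -/
def NonTopLinked {V : Type*} (R : V → V → Prop) (S : Set V) : Prop :=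
  ∀ u v : V, R u v → v ∈ S → u ∈ S

/-- Dynamics pattern `(I_r ⊗ Ā') ∨ (Ē ⊗ H̄)` of a system of `r` similar subsystems. -/
def simA {n : ℕ} (r : ℕ) (A' H : Matrix (Fin n) (Fin n) Bool)
    (E : Matrix (Fin r) (Fin r) Bool) :
    Matrix (Fin r × Fin n) (Fin r × Fin n) Bool :=
  fun q q' => ((if q.1 = q'.1 then A' q.2 q'.2 else false) || (E q.1 q'.1 && H q.2 q'.2))

/-- Input pattern `I_r ⊗ B̄'` of a system of `r` similar subsystems. -/
def simB {n p : ℕ} (r : ℕ) (B' : Matrix (Fin n) (Fin p) Bool) :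
    Matrix (Fin r × Fin n) (Fin r × Fin p) Bool :=
  fun q k => if q.1 = k.1 then B' q.2 k.2 else false

/-- Entrywise OR of Boolean matrices. -/
def orMat {X Y : Type*} (M N : Matrix X Y Bool) : Matrix X Y Bool :=
  fun i j => M i j || N i j

/-- Dynamics pattern of an interconnected system: diagonal blocks `Ā_i`,
off-diagonal blocks `Ē_{i,j}`. -/
def interA {r : ℕ} {n : Fin r → ℕ}
    (A : ∀ i, Matrix (Fin (n i)) (Fin (n i)) Bool)
    (E : ∀ i j, Matrix (Fin (n i)) (Fin (n j)) Bool) :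
    Matrix (Σ i, Fin (n i)) (Σ i, Fin (n i)) Bool :=
  fun q q' => if h : q'.1 = q.1 then A q.1 q.2 (h ▸ q'.2) else E q.1 q'.1 q.2 q'.2

/-- Input pattern of an interconnected system: block diagonal with blocks `B̄_i`. -/
def interB {r : ℕ} {n p : Fin r → ℕ}
    (B : ∀ i, Matrix (Fin (n i)) (Fin (p i)) Bool) :
    Matrix (Σ i, Fin (n i)) (Σ i, Fin (p i)) Bool :=
  fun q k => if h : k.1 = q.1 then B q.1 q.2 (h ▸ k.2) else false


/-!
Each subsystem has states `0, 1` and one input acting on state `0`; state `1` carries only a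
self-loop, so in isolation it is unreachable and its row of the controllability matrix vanishes.
The coupling `H̄` feeds state `1` of subsystem `i` from state `0` of subsystem `j` whenever
`Ē i j`. Column `1` of `Ē` is zero, so subsystem `1` has no outgoing edge in `D(Ē)` and no cycle
cover exists. Yet the realization with weight `i + 1` on every edge into subsystem `i` is
controllable: the distinct self-loop weights separate `A B e₀` from `A² B e₀`, which together with
`A B e₂` span the `1`-states, as an explicit nonsingular `6 × 6` minor of `[B, AB, A²B]` shows.
-/

section Controllability

variable {X U : Type*} [Fintype X] [DecidableEq X]

lemma ctrbMatrix_row_eq_zero {A : Matrix X X ℝ} {B : Matrix X U ℝ} {i : X}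
    (hB : ∀ u, B i u = 0) (hA : ∀ j ≠ i, A i j = 0) : ctrbMatrix A B i = 0 := by
  suffices h : ∀ k : ℕ, ∀ u, (A ^ k * B) i u = 0 from funext fun c => h c.1 c.2
  intro k
  induction k with
  | zero => simpa using hB
  | succ k ih =>
    intro u
    rw [pow_succ', Matrix.mul_assoc, mul_apply, Fintype.sum_eq_single i fun j hj => by
      rw [hA j hj, zero_mul], ih, mul_zero]

variable [Fintype U]

lemma not_controllable_of_ctrbMatrix_row_eq_zero {A : Matrix X X ℝ} {B : Matrix X U ℝ} {i : X}
    (h : ctrbMatrix A B i = 0) : ¬ Controllable A B := by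
  have hrank : (ctrbMatrix A B).rank ≤ (Finset.univ.erase i).card :=
    rank_le_card_of_support_subset _ _ fun j hj => by
      simp only [Finset.coe_erase, Finset.coe_univ, Set.mem_sdiff, Set.mem_univ,
        Set.mem_singleton_iff, true_and]
      rintro rfl
      exact hj h
  rw [Finset.card_erase_of_mem (Finset.mem_univ i), Finset.card_univ] at hrank
  have : 0 < Fintype.card X := Fintype.card_pos_iff.mpr ⟨i⟩
  unfold Controllable
  omega

lemma controllable_of_det_ne_zero {ι : Type*} [Fintype ι] [DecidableEq ι]
    {A : Matrix X X ℝ} {B : Matrix X U ℝ} (e : ι ≃ X) (c : ι → Fin (Fintype.card X) × U)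
    (h : ((ctrbMatrix A B).submatrix e c).det ≠ 0) : Controllable A B := by
  refine le_antisymm (rank_le_card_height _) ?_
  calc Fintype.card X = Fintype.card ι := (Fintype.card_congr e).symm
    _ = ((ctrbMatrix A B).submatrix e c).rank :=
      (rank_of_isUnit _ ((isUnit_iff_isUnit_det _).mpr (isUnit_iff_ne_zero.mpr h))).symm
    _ ≤ (ctrbMatrix A B).rank := rank_submatrix_le _ _ _

lemma not_structurallyControllable_of_unreachable {Ab : Matrix X X Bool} {Bb : Matrix X U Bool}
    (i : X) (hB : ∀ u, Bb i u = false) (hA : ∀ j ≠ i, Ab i j = false) :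
    ¬ StructurallyControllable Ab Bb := by
  rintro ⟨A, B, hAs, hBs, hctrb⟩
  exact not_controllable_of_ctrbMatrix_row_eq_zero
    (ctrbMatrix_row_eq_zero (fun u => (hBs i u).mpr (hB u))
      (fun j hj => (hAs i j).mpr (hA j hj))) hctrb

end Controllability

def realization {X Y : Type*} (Mb : Matrix X Y Bool) (w : X → Y → ℝ) : Matrix X Y ℝ :=
  Matrix.of fun i j => if Mb i j then w i j else 0

lemma sameSparsity_realization {X Y : Type*} {Mb : Matrix X Y Bool} {w : X → Y → ℝ}
    (hw : ∀ i j, Mb i j = true → w i j ≠ 0) : SameSparsity (realization Mb w) Mb := by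
  intro i j
  cases h : Mb i j <;> simp [realization, h, hw i j]

lemma not_exists_perm_of_col_eq_false {ι : Type*} {E : Matrix ι ι Bool} (j : ι)
    (hj : ∀ i, E i j = false) : ¬ ∃ σ : Equiv.Perm ι, ∀ i, E (σ i) i = true :=
  fun ⟨σ, hσ⟩ => by simpa [hj] using hσ j

def exA : Matrix (Fin 2) (Fin 2) Bool := !![false, false; false, true]
def exH : Matrix (Fin 2) (Fin 2) Bool := !![false, false; true, false]
def exB : Matrix (Fin 2) (Fin 1) Bool := !![true; false]
def exE : Matrix (Fin 3) (Fin 3) Bool :=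
  !![false, false, true; true, false, true; true, false, false]

def exRealA : Matrix (Fin 3 × Fin 2) (Fin 3 × Fin 2) ℝ :=
  realization (simA 3 exA exH exE) fun q _ => q.1 + 1

def exRealB : Matrix (Fin 3 × Fin 2) (Fin 3 × Fin 1) ℝ :=
  realization (simB 3 exB) fun _ _ => 1

/- The columns `B e₀, A B e₂, B e₁, A B e₀, B e₂, A² B e₀` of `[B, AB, …]`: in the state order
`(0,0), (0,1), …, (2,1)` they form a lower triangular matrix up to the block `[[2, 4], [3, 9]]`. -/
def exCtrbColumns : Fin 6 → Fin (Fintype.card (Fin 3 × Fin 2)) × (Fin 3 × Fin 1) :=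
  ![(0, (0, 0)), (1, (2, 0)), (0, (1, 0)), (1, (0, 0)), (0, (2, 0)), (2, (0, 0))]

lemma exCtrb_submatrix_eq :
    (ctrbMatrix exRealA exRealB).submatrix finProdFinEquiv.symm exCtrbColumns =
    !![1, 0, 0, 0, 0, 0; 0, 1, 0, 0, 0, 0; 0, 0, 1, 0, 0, 0;
       0, 2, 0, 2, 0, 4; 0, 0, 0, 0, 1, 0; 0, 0, 0, 3, 0, 9] := by
  ext a b
  fin_cases a <;> fin_cases b <;>
    simp [ctrbMatrix, exCtrbColumns, exRealA, exRealB, realization, simA, simB,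
      exA, exH, exB, exE, sq, mul_apply, Fintype.sum_prod_type, Fin.sum_univ_succ,
      finProdFinEquiv, Fin.divNat, Fin.modNat] <;> norm_num

lemma exReal_controllable : Controllable exRealA exRealB := by
  refine controllable_of_det_ne_zero finProdFinEquiv.symm exCtrbColumns ?_
  rw [exCtrb_submatrix_eq]
  simp [det_succ_row_zero, Fin.sum_univ_succ, Fin.succAbove]
  norm_num

/-- the sufficient conditions of Theorem 2 are not necessary: there is a
similar system whose subsystem pattern `(Ā', B̄')` is not structurally controllable, whose
overall pattern `(Ā, B̄)` is structurally controllable, and whose condensed graph `D(Ē)` is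
not spanned by disjoint cycles. -/
theorem cycle_spanning_condition_not_necessary :
    ∃ (n p r : ℕ) (A' H : Matrix (Fin n) (Fin n) Bool) (B' : Matrix (Fin n) (Fin p) Bool)
      (E : Matrix (Fin r) (Fin r) Bool),
      (∀ i, E i i = false) ∧
      ¬ StructurallyControllable A' B' ∧
      StructurallyControllable (simA r A' H E) (simB r B') ∧
      ¬ ∃ σ : Equiv.Perm (Fin r), ∀ i : Fin r, E (σ i) i = true := by
  refine ⟨2, 1, 3, exA, exH, exB, exE, by decide, ?_, ?_, ?_⟩
  · exact not_structurallyControllable_of_unreachable 1 (by decide) (by decide)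
  · refine ⟨exRealA, exRealB, sameSparsity_realization fun _ _ _ => ?_,
      sameSparsity_realization fun _ _ _ => one_ne_zero, exReal_controllable⟩
    positivity
  · exact not_exists_perm_of_col_eq_false 1 (by decide)
end

section
/- Let (Ā, B̄) be the structural pair composed of r similar subsystems parametrized by (Ā', B̄', H̄, Ē). If (Ā' ∨ H̄, B̄') is structurally controllable and the condensed graph D(Ē) has no source (for every i ∈ {1,…,r} there exists j with Ē_{ij} = 1), then every state vertex of the system digraph D(Ā, B̄) is input-reachable. -/
open Matrix

/-!
If no input reaches the state `x`, then by induction on `k` the row `x` of `A ^ k * B` vanishes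
for every realisation `(A, B)` of the pattern, since that row only collects products along walks
into `x`. The controllability matrix then has a zero row and cannot have full rank, so
structural controllability of `(Ā' ∨ H̄, B̄')` makes every state of its digraph input-reachable.

A path of `D(Ā' ∨ H̄, B̄')` lifts into every block `q` of the composite system: an `Ā'`-edge
stays in block `q`, and an `H̄`-edge `j → i` becomes the edge `(q', j) → (q, i)` for an
in-neighbour `q'` of `q` in `D(Ē)`, which exists because `D(Ē)` has no source.
-/

theorem Matrix.row_ne_zero_of_rank_eq_card {m n R : Type*} [Fintype m] [Fintype n] [Field R]
    {M : Matrix m n R} (hM : M.rank = Fintype.card m) (x : m) : M x ≠ 0 := by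
  have hli : LinearIndependent R M.row := by
    rw [linearIndependent_iff_card_eq_finrank_span, ← hM, M.rank_eq_finrank_span_row]
    rfl
  exact hli.ne_zero x

theorem SameSparsity.eq_true_of_ne_zero {X Y : Type*} {M : Matrix X Y ℝ} {Mb : Matrix X Y Bool}
    (h : SameSparsity M Mb) {i : X} {j : Y} (hij : M i j ≠ 0) : Mb i j = true := by
  simpa [h i j] using hij

section InputReachable

variable {X U : Type*} {Ab : Matrix X X Bool} {Bb : Matrix X U Bool}

theorem InputReachable.of_input_edge {x : X} {u : U} (h : Bb x u = true) :
    InputReachable Ab Bb x :=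
  ⟨u, .single h⟩

theorem InputReachable.of_state_edge {y x : X} (hy : InputReachable Ab Bb y)
    (h : Ab x y = true) : InputReachable Ab Bb x :=
  let ⟨u, hu⟩ := hy
  ⟨u, hu.tail h⟩

theorem pow_mul_apply_eq_zero_of_not_inputReachable [Fintype X] [DecidableEq X]
    {A : Matrix X X ℝ} {B : Matrix X U ℝ} (hA : SameSparsity A Ab) (hB : SameSparsity B Bb)
    (k : ℕ) {x : X} (hx : ¬ InputReachable Ab Bb x) (u : U) : (A ^ k * B) x u = 0 := by
  induction k generalizing x with
  | zero =>
    rw [pow_zero, Matrix.one_mul]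
    by_contra hxu
    exact hx (.of_input_edge (hB.eq_true_of_ne_zero hxu))
  | succ k ih =>
    rw [pow_succ', Matrix.mul_assoc, Matrix.mul_apply]
    refine Finset.sum_eq_zero fun y _ => ?_
    by_cases hxy : A x y = 0
    · rw [hxy, zero_mul]
    · have hy : ¬ InputReachable Ab Bb y := fun hy =>
        hx (hy.of_state_edge (hA.eq_true_of_ne_zero hxy))
      rw [ih hy, mul_zero]

theorem StructurallyControllable.inputReachable [Fintype X] [DecidableEq X] [Fintype U]
    (h : StructurallyControllable Ab Bb) (x : X) : InputReachable Ab Bb x := by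
  obtain ⟨A, B, hA, hB, hc⟩ := h
  by_contra hx
  refine Matrix.row_ne_zero_of_rank_eq_card (R := ℝ) hc x ?_
  funext ku
  exact pow_mul_apply_eq_zero_of_not_inputReachable hA hB ku.1 hx ku.2

end InputReachable

section SimilarSubsystems

variable {n p r : ℕ} {A' H : Matrix (Fin n) (Fin n) Bool} {B' : Matrix (Fin n) (Fin p) Bool}
  {E : Matrix (Fin r) (Fin r) Bool}

theorem simB_apply_self (q : Fin r) {i : Fin n} {k : Fin p} (h : B' i k = true) :
    simB r B' (q, i) (q, k) = true := by
  simp [simB, h]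

theorem simA_apply_self (q : Fin r) {i j : Fin n} (h : A' i j = true) :
    simA r A' H E (q, i) (q, j) = true := by
  simp [simA, h]

theorem simA_apply_of_interconnection {q q' : Fin r} {i j : Fin n} (hE : E q q' = true)
    (hH : H i j = true) : simA r A' H E (q, i) (q', j) = true := by
  simp [simA, hE, hH]

theorem exists_lift_of_reflTransGen_sysDigraphRel_orMat
    (hnosource : ∀ q : Fin r, ∃ q' : Fin r, E q q' = true) {u : Fin p} {v : Fin n ⊕ Fin p}
    (hpath : Relation.ReflTransGen (sysDigraphRel (orMat A' H) B') (.inr u) v) (q : Fin r) :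
    ∃ u' : Fin r × Fin p, Relation.ReflTransGen (sysDigraphRel (simA r A' H E) (simB r B'))
      (.inr u') (Sum.map (Prod.mk q) (Prod.mk q) v) := by
  induction hpath generalizing q with
  | refl => exact ⟨(q, u), .refl⟩
  | @tail b c _ hbc ih =>
    match b, c, hbc with
    | .inr k, .inl i, hki => exact ⟨(q, k), .single (simB_apply_self q hki)⟩
    | .inl j, .inl i, hji =>
      rcases Bool.or_eq_true_iff.mp hji with hA' | hH
      · obtain ⟨u', hu'⟩ := ih q
        exact ⟨u', hu'.tail (simA_apply_self q hA')⟩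
      · obtain ⟨q', hq'⟩ := hnosource q
        obtain ⟨u', hu'⟩ := ih q'
        exact ⟨u', hu'.tail (simA_apply_of_interconnection hq' hH)⟩

end SimilarSubsystems

theorem similar_system_inputReachable_of_no_source_general
    {n p : ℕ} {r : ℕ}
    (A' H : Matrix (Fin n) (Fin n) Bool) (B' : Matrix (Fin n) (Fin p) Bool)
    (E : Matrix (Fin r) (Fin r) Bool)
    (hsc : StructurallyControllable (orMat A' H) B')
    (hnosource : ∀ i : Fin r, ∃ j : Fin r, E i j = true) :
    ∀ x : Fin r × Fin n, InputReachable (simA r A' H E) (simB r B') x := by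
  rintro ⟨q, i⟩
  obtain ⟨u, hu⟩ := hsc.inputReachable i
  exact exists_lift_of_reflTransGen_sysDigraphRel_orMat hnosource hu q

/-- for a system of `r` similar subsystems parametrized by
`(Ā', B̄', H̄, Ē)`, if `(Ā' ∨ H̄, B̄')` is structurally controllable and the condensed graph
`D(Ē)` has no source, then every state vertex of `D(Ā, B̄)` is input-reachable. -/
theorem similar_system_inputReachable_of_no_source
    {n p : ℕ} {r : ℕ}
    (A' H : Matrix (Fin n) (Fin n) Bool) (B' : Matrix (Fin n) (Fin p) Bool)
    (E : Matrix (Fin r) (Fin r) Bool) (hE : ∀ i, E i i = false)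
    (hsc : StructurallyControllable (orMat A' H) B')
    (hnosource : ∀ i : Fin r, ∃ j : Fin r, E i j = true) :
    ∀ x : Fin r × Fin n, InputReachable (simA r A' H E) (simB r B') x :=
  similar_system_inputReachable_of_no_source_general A' H B' E hsc hnosource
end

section
/- Let (Ā, B̄) be the structural pair composed of r similar subsystems parametrized by (Ā', B̄', H̄, Ē). If the state vertex of the overall system digraph D(Ā, B̄) corresponding to coordinate k of subsystem i (i.e., vertex x_{(i−1)n + k}) is input-reachable in D(Ā, B̄), then the state vertex x_k is input-reachable in the system digraph D(Ā' ∨ H̄, B̄'). Consequently, if D(Ā' ∨ H̄, B̄') has a state vertex that is not input-reachable, then D(Ā, B̄) has, in every subsystem, a state vertex that is not input-reachable. -/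
open Matrix

theorem InputReachable.map {X U Y V : Type*} {A : Matrix X X Bool} {B : Matrix X U Bool}
    {A' : Matrix Y Y Bool} {B' : Matrix Y V Bool} (f : X → Y) (g : U → V)
    (hA : ∀ i j, A i j = true → A' (f i) (f j) = true)
    (hB : ∀ i k, B i k = true → B' (f i) (g k) = true) {x : X}
    (hx : InputReachable A B x) : InputReachable A' B' (f x) := by
  obtain ⟨u, hu⟩ := hx
  refine ⟨g u, hu.lift (Sum.map f g) ?_⟩
  rintro (j | k) (i | _) h
  · exact hA i j h
  · exact h.elim
  · exact hB i k h
  · exact h.elim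

theorem orMat_snd_of_simA {n r : ℕ} {A' H : Matrix (Fin n) (Fin n) Bool}
    {E : Matrix (Fin r) (Fin r) Bool} {q q' : Fin r × Fin n}
    (h : simA r A' H E q q' = true) : orMat A' H q.2 q'.2 = true := by
  simp only [simA, orMat, Bool.or_eq_true, Bool.and_eq_true] at h ⊢
  rcases h with hA | ⟨-, hH⟩
  · split_ifs at hA
    exact .inl hA
  · exact .inr hH

theorem snd_of_simB {n p r : ℕ} {B' : Matrix (Fin n) (Fin p) Bool}
    {q : Fin r × Fin n} {k : Fin r × Fin p}
    (h : simB r B' q k = true) : B' q.2 k.2 = true := by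
  unfold simB at h
  split_ifs at h
  exact h

theorem similar_system_inputReachable_projects_general
    {n p : ℕ} {r : ℕ}
    (A' H : Matrix (Fin n) (Fin n) Bool) (B' : Matrix (Fin n) (Fin p) Bool)
    (E : Matrix (Fin r) (Fin r) Bool) :
    (∀ (i : Fin r) (k : Fin n),
      InputReachable (simA r A' H E) (simB r B') (i, k) →
        InputReachable (orMat A' H) B' k) ∧
    ((∃ k : Fin n, ¬ InputReachable (orMat A' H) B' k) →
      ∀ i : Fin r, ∃ k : Fin n,
        ¬ InputReachable (simA r A' H E) (simB r B') (i, k)) := by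
  -- Forgetting the subsystem index maps every edge of `D(Ā, B̄)` onto an edge of `D(Ā' ∨ H̄, B̄')`.
  have project : ∀ (i : Fin r) (k : Fin n),
      InputReachable (simA r A' H E) (simB r B') (i, k) →
        InputReachable (orMat A' H) B' k := fun _ _ h =>
    h.map Prod.snd Prod.snd (fun _ _ => orMat_snd_of_simA) (fun _ _ => snd_of_simB)
  exact ⟨project, fun ⟨k, hk⟩ i => ⟨k, fun h => hk (project i k h)⟩⟩

/-- for a system of `r` similar subsystems parametrized by
`(Ā', B̄', H̄, Ē)`, if the state vertex `(i, k)` (coordinate `k` of subsystem `i`) of the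
overall system digraph `D(Ā, B̄)` is input-reachable, then the state vertex `x_k` is
input-reachable in `D(Ā' ∨ H̄, B̄')`.  Consequently, if `D(Ā' ∨ H̄, B̄')` has a state vertex
that is not input-reachable, then every subsystem of `D(Ā, B̄)` has a state vertex that is
not input-reachable. -/
theorem similar_system_inputReachable_projects
    {n p : ℕ} {r : ℕ}
    (A' H : Matrix (Fin n) (Fin n) Bool) (B' : Matrix (Fin n) (Fin p) Bool)
    (E : Matrix (Fin r) (Fin r) Bool) (hE : ∀ i, E i i = false) :
    (∀ (i : Fin r) (k : Fin n),
      InputReachable (simA r A' H E) (simB r B') (i, k) →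
        InputReachable (orMat A' H) B' k) ∧
    ((∃ k : Fin n, ¬ InputReachable (orMat A' H) B' k) →
      ∀ i : Fin r, ∃ k : Fin n,
        ¬ InputReachable (simA r A' H E) (simB r B') (i, k)) :=
  similar_system_inputReachable_projects_general A' H B' E
end
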